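/- arXiv:0807.2123 — 2 statements merged into one kernel-verified Lean document; each statement's English description precedes it below -/
import Mathlib

section
/- (Pressure distribution principle.) Let f: X → X be a continuous transformation of a compact metric space (X,d), ψ ∈ C(X), and Z ⊆ X an arbitrary Borel set. Suppose there exists a constant s ≥ 0 such that for all sufficiently small ε > 0 one can find a Borel probability measure μ_ε and a constant K(ε) > 0 with μ_ε(Z) > 0 and μ_ε(B_n(x,ε)) ≤ K(ε)·exp(−ns + S_nψ(x)) for all sufficiently large n and every ball B_n(x,ε) having non-empty intersection with Z. Then P_Z(ψ) ≥ s. -/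
open MeasureTheory Filter Topology Set
open scoped ENNReal NNReal

section Preamble

variable {X : Type*}

/-- The Bowen dynamical ball `B_n(x, ε)` for the map `f`. -/
def dynBall [PseudoMetricSpace X] (f : X → X) (n : ℕ) (x : X) (ε : ℝ) : Set X :=
  {y | ∀ i < n, dist (f^[i] x) (f^[i] y) < ε}

/-- The supremum of the Birkhoff sum `S_n ψ` over the dynamical ball `B_n(x, ε)`. -/
noncomputable def supBirkhoff [PseudoMetricSpace X] (f : X → X) (ψ : X → ℝ) (n : ℕ) (x : X)
    (ε : ℝ) : ℝ :=
  sSup (birkhoffSum f ψ n '' dynBall f n x ε)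

/-- The quantity `Q(Z, α, Γ, ψ)` attached to a collection `Γ` of dynamical balls, each ball
being recorded by its centre and its length. -/
noncomputable def ppQ [PseudoMetricSpace X] (f : X → X) (ψ : X → ℝ) (ε α : ℝ)
    (Γ : Set (X × ℕ)) : ℝ≥0∞ :=
  ∑' p : Γ, ENNReal.ofReal
    (Real.exp (-α * ((↑p : X × ℕ).2 : ℝ) + supBirkhoff f ψ (↑p : X × ℕ).2 (↑p : X × ℕ).1 ε))

/-- `M(Z, α, ε, N, ψ)`: infimum of `Q` over all finite or countable covers of `Z` by dynamical
balls of length at least `N`. -/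
noncomputable def ppM [PseudoMetricSpace X] (f : X → X) (ψ : X → ℝ) (ε α : ℝ) (N : ℕ)
    (Z : Set X) : ℝ≥0∞ :=
  ⨅ (Γ : Set (X × ℕ)) (_ : Γ.Countable) (_ : Z ⊆ ⋃ p ∈ Γ, dynBall f p.2 p.1 ε)
    (_ : ∀ p ∈ Γ, N ≤ p.2), ppQ f ψ ε α Γ

/-- `m(Z, α, ε, ψ) = lim_{N → ∞} M(Z, α, ε, N, ψ)`; the limit of this nondecreasing quantity
is its supremum. -/
noncomputable def ppm [PseudoMetricSpace X] (f : X → X) (ψ : X → ℝ) (ε α : ℝ) (Z : Set X) :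
    ℝ≥0∞ :=
  ⨆ N : ℕ, ppM f ψ ε α N Z

/-- The Pesin–Pitskel pressure of `ψ` on `Z` at scale `ε`:
`P_Z(ψ, ε) = inf {α : m(Z, α, ε, ψ) = 0}`. -/
noncomputable def ppPressureAt [PseudoMetricSpace X] (f : X → X) (ψ : X → ℝ) (ε : ℝ)
    (Z : Set X) : EReal :=
  sInf {a : EReal | ∃ α : ℝ, a = (α : EReal) ∧ ppm f ψ ε α Z = 0}

/-- The Pesin–Pitskel topological pressure `P_Z(ψ) = lim_{ε → 0} P_Z(ψ, ε)` (the limit exists,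
hence equals the `limsup` as `ε → 0⁺`). -/
noncomputable def ppPressure [PseudoMetricSpace X] (f : X → X) (ψ : X → ℝ) (Z : Set X) :
    EReal :=
  limsup (fun ε : ℝ => ppPressureAt f ψ ε Z) (𝓝[>] (0 : ℝ))

/-- An `(n, ε)`-separated set for the map `f`. -/
def IsDynSeparated [PseudoMetricSpace X] (f : X → X) (n : ℕ) (ε : ℝ) (S : Set X) : Prop :=
  S.Pairwise fun x y => ∃ i < n, ε < dist (f^[i] x) (f^[i] y)

/-- The largest sum `Σ_{x ∈ S} exp (S_n ψ x)` over `(n, ε)`-separated sets `S`. -/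
noncomputable def sepSum [PseudoMetricSpace X] (f : X → X) (ψ : X → ℝ) (n : ℕ) (ε : ℝ) : ℝ :=
  sSup {r : ℝ | ∃ S : Finset X, IsDynSeparated f n ε ↑S ∧
    r = ∑ x ∈ S, Real.exp (birkhoffSum f ψ n x)}

/-- The classical topological pressure of `ψ` on the whole space, defined via separated sets:
`P(ψ) = lim_{ε → 0} limsup_{n → ∞} (1/n) log P_n(ψ, ε)` (the limit over `ε` exists by
monotonicity, hence equals the `limsup` as `ε → 0⁺`). -/
noncomputable def classicPressure [PseudoMetricSpace X] (f : X → X) (ψ : X → ℝ) : EReal :=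
  limsup (fun ε : ℝ =>
    limsup (fun n : ℕ => ((Real.log (sepSum f ψ n ε) / n : ℝ) : EReal)) atTop) (𝓝[>] (0 : ℝ))

/-- The specification property on an invariant subset `X'`. -/
def SpecificationOn [PseudoMetricSpace X] (f : X → X) (X' : Set X) : Prop :=
  ∀ ε : ℝ, 0 < ε → ∃ m : ℕ, ∀ k : ℕ, ∀ a b : Fin k → ℕ,
    (∀ j, a j ≤ b j) →
    (∀ (j : Fin k) (h : (j : ℕ) + 1 < k), b j + m ≤ a ⟨(j : ℕ) + 1, h⟩) →
    ∀ xs : Fin k → X, (∀ j, xs j ∈ X') →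
      ∃ x : X, ∀ j : Fin k, ∀ p ≤ b j - a j, dist (f^[p + a j] x) (f^[p] (xs j)) < ε

/-- The specification property. -/
def Specification [PseudoMetricSpace X] (f : X → X) : Prop :=
  SpecificationOn f Set.univ

/-- Bowen's specification property: the shadowing point can be taken to be a periodic point of
any prescribed sufficiently large least period. -/
def BowenSpecification [PseudoMetricSpace X] (f : X → X) : Prop :=
  ∀ ε : ℝ, 0 < ε → ∃ m : ℕ, ∀ k : ℕ, ∀ a b : Fin (k + 1) → ℕ,
    (∀ j, a j ≤ b j) →
    (∀ (j : Fin (k + 1)) (h : (j : ℕ) + 1 < k + 1), b j + m ≤ a ⟨(j : ℕ) + 1, h⟩) →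
    ∀ xs : Fin (k + 1) → X, ∀ p : ℕ, b (Fin.last k) - a 0 + m ≤ p →
      ∃ x : X, Function.minimalPeriod f x = p ∧
        ∀ j : Fin (k + 1), ∀ q ≤ b j - a j, dist (f^[q + a j] x) (f^[q] (xs j)) < ε

/-- The irregular set of `φ`: points where the Birkhoff average does not converge. -/
def irregularSet (f : X → X) (φ : X → ℝ) : Set X :=
  {x | ¬ ∃ c : ℝ, Tendsto (fun n : ℕ => birkhoffSum f φ n x / n) atTop (𝓝 c)}

/-- The set of values `∫ φ dμ` over `f`-invariant Borel probability measures `μ`. -/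
def invIntegrals [MeasurableSpace X] (f : X → X) (φ : X → ℝ) : Set ℝ :=
  {r | ∃ μ : Measure X, IsProbabilityMeasure μ ∧ Measure.map f μ = μ ∧ r = ∫ x, φ x ∂μ}

/-- The set of values `∫ φ dμ` over ergodic `f`-invariant Borel probability measures `μ`. -/
def ergIntegrals [MeasurableSpace X] (f : X → X) (φ : X → ℝ) : Set ℝ :=
  {r | ∃ μ : Measure X, IsProbabilityMeasure μ ∧ Ergodic f μ ∧ r = ∫ x, φ x ∂μ}

/-- The set of values `∫ φ dμ` over `f`-invariant Borel probability measures `μ` with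
`μ(X') = 1`. -/
def invIntegralsOn [MeasurableSpace X] (f : X → X) (φ : X → ℝ) (X' : Set X) : Set ℝ :=
  {r | ∃ μ : Measure X, IsProbabilityMeasure μ ∧ Measure.map f μ = μ ∧ μ X' = 1 ∧
    r = ∫ x, φ x ∂μ}

/-- A finite measurable partition of the space. -/
def IsMeasPartition [MeasurableSpace X] (P : Finset (Set X)) : Prop :=
  (∀ A ∈ P, MeasurableSet A) ∧ ⋃₀ (↑P : Set (Set X)) = Set.univ ∧
    (↑P : Set (Set X)).Pairwise Disjoint

/-- The entropy `H_μ(P ∨ f⁻¹P ∨ ⋯ ∨ f⁻⁽ⁿ⁻¹⁾P)` of the `n`-th dynamical refinement of the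
finite partition `P`. -/
noncomputable def refinedEntropy [MeasurableSpace X] (μ : Measure X) (f : X → X)
    (P : Finset (Set X)) (n : ℕ) : ℝ :=
  ∑ c : Fin n → {A // A ∈ P},
    Real.negMulLog ((μ (⋂ i : Fin n, f^[(i : ℕ)] ⁻¹' ((c i : Set X)))).toReal)

/-- The dynamical entropy of a finite partition: `lim (1/n) H_μ(⋁ f⁻ⁱP)`, which by
subadditivity equals the infimum. -/
noncomputable def entropyOfPartition [MeasurableSpace X] (μ : Measure X) (f : X → X)
    (P : Finset (Set X)) : ℝ :=
  ⨅ n : ℕ, refinedEntropy μ f P (n + 1) / ((n : ℝ) + 1)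

/-- The measure-theoretic (Kolmogorov–Sinai) entropy `h_μ(f)`. -/
noncomputable def ksEntropy [MeasurableSpace X] (μ : Measure X) (f : X → X) : EReal :=
  ⨆ (P : Finset (Set X)) (_ : IsMeasPartition P), ((entropyOfPartition μ f P : ℝ) : EReal)

/-- `sup { h_μ + ∫ ψ dμ : μ ∈ M_f(X') }`. -/
noncomputable def supEntropyPlus [PseudoMetricSpace X] [MeasurableSpace X] (f : X → X)
    (ψ : X → ℝ) (X' : Set X) : EReal :=
  ⨆ (μ : Measure X) (_ : IsProbabilityMeasure μ) (_ : Measure.map f μ = μ) (_ : μ X' = 1),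
    (ksEntropy μ f + ((∫ x, ψ x ∂μ : ℝ) : EReal))

end Preamble


/-! Fix a small scale `ε` and `α < s`. Any countable cover of `Z` by dynamical balls
`B_{n_i}(x_i, ε)` with `n_i ≥ N` has, by the hypothesis and `S_n ψ(x) ≤ sup_{B_n(x, ε)} S_n ψ`,
`μ(Z) ≤ Σ μ(B_{n_i}(x_i, ε) ∩ Z) ≤ K · Q(Z, α, Γ, ψ)`. Hence `m(Z, α, ε, ψ) ≥ μ(Z)/K > 0`,
so `P_Z(ψ, ε) ≥ α` for every `α < s`, i.e. `P_Z(ψ, ε) ≥ s`; letting `ε → 0` gives the claim. -/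

theorem continuous_birkhoffSum {X M : Type*} [TopologicalSpace X] [AddCommMonoid M]
    [TopologicalSpace M] [ContinuousAdd M] {f : X → X} {ψ : X → M} (hf : Continuous f)
    (hψ : Continuous ψ) (n : ℕ) : Continuous (birkhoffSum f ψ n) :=
  continuous_finsetSum _ fun i _ => hψ.comp (hf.iterate i)

section DynamicalBalls

variable {X : Type*} [PseudoMetricSpace X] {f : X → X} {ψ : X → ℝ} {ε : ℝ}

theorem mem_dynBall_self (hε : 0 < ε) (n : ℕ) (x : X) : x ∈ dynBall f n x ε :=
  fun _ _ => by simpa using hε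

theorem birkhoffSum_le_supBirkhoff [CompactSpace X] (hf : Continuous f) (hψ : Continuous ψ)
    (hε : 0 < ε) (n : ℕ) (x : X) : birkhoffSum f ψ n x ≤ supBirkhoff f ψ n x ε :=
  le_csSup ((isCompact_range (continuous_birkhoffSum hf hψ n)).bddAbove.mono
    (image_subset_range _ _)) ⟨x, mem_dynBall_self hε n x, rfl⟩

theorem le_ppPressureAt_of_ppm_ne_zero {Z : Set X} {s : ℝ}
    (h : ∀ α < s, ppm f ψ ε α Z ≠ 0) : (s : EReal) ≤ ppPressureAt f ψ ε Z := by
  refine le_sInf ?_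
  rintro _ ⟨α, rfl, hα⟩
  by_contra! hlt
  exact h α (EReal.coe_lt_coe_iff.mp hlt) hα

theorem le_ppPressure_of_eventually_le {Z : Set X} {s : EReal}
    (h : ∀ᶠ ε in 𝓝[>] (0 : ℝ), s ≤ ppPressureAt f ψ ε Z) : s ≤ ppPressure f ψ Z :=
  le_limsup_of_frequently_le' h.frequently

end DynamicalBalls

section MassDistribution

variable {X : Type*} [PseudoMetricSpace X] [MeasurableSpace X] {f : X → X} {ψ : X → ℝ}
  {μ : Measure X} {Z : Set X} {ε α : ℝ} {C : ℝ≥0∞}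

theorem measure_le_mul_ppQ {Γ : Set (X × ℕ)} (hΓ : Γ.Countable)
    (hcov : Z ⊆ ⋃ p ∈ Γ, dynBall f p.2 p.1 ε)
    (hball : ∀ p ∈ Γ, μ (dynBall f p.2 p.1 ε ∩ Z) ≤
      C * ENNReal.ofReal (Real.exp (-α * (p.2 : ℝ) + supBirkhoff f ψ p.2 p.1 ε))) :
    μ Z ≤ C * ppQ f ψ ε α Γ := by
  have hcovZ : Z ⊆ ⋃ p ∈ Γ, dynBall f p.2 p.1 ε ∩ Z := by
    rw [← iUnion₂_inter]
    exact subset_inter hcov subset_rfl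
  calc μ Z ≤ μ (⋃ p ∈ Γ, dynBall f p.2 p.1 ε ∩ Z) := measure_mono hcovZ
    _ ≤ ∑' p : Γ, μ (dynBall f (p : X × ℕ).2 (p : X × ℕ).1 ε ∩ Z) :=
        measure_biUnion_le μ hΓ _
    _ ≤ ∑' p : Γ, C * ENNReal.ofReal (Real.exp (-α * ((p : X × ℕ).2 : ℝ) +
          supBirkhoff f ψ (p : X × ℕ).2 (p : X × ℕ).1 ε)) :=
        ENNReal.tsum_le_tsum fun p => hball p p.2
    _ = C * ppQ f ψ ε α Γ := ENNReal.tsum_mul_left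

theorem ppm_ne_zero (hZ : μ Z ≠ 0) (hC : C ≠ ⊤) {N : ℕ}
    (hball : ∀ n ≥ N, ∀ x : X, μ (dynBall f n x ε ∩ Z) ≤
      C * ENNReal.ofReal (Real.exp (-α * (n : ℝ) + supBirkhoff f ψ n x ε))) :
    ppm f ψ ε α Z ≠ 0 := by
  have hM : μ Z / C ≤ ppM f ψ ε α N Z :=
    le_iInf₂ fun Γ hΓ => le_iInf₂ fun hcov hlen => ENNReal.div_le_of_le_mul'
      (measure_le_mul_ppQ hΓ hcov fun p hp => hball p.2 (hlen p hp) p.1)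
  exact (((ENNReal.div_pos hZ hC).trans_le hM).trans_le (le_iSup (ppM f ψ ε α · Z) N)).ne'

theorem measure_dynBall_inter_le [CompactSpace X] (hf : Continuous f) (hψ : Continuous ψ)
    (hε : 0 < ε) {K s : ℝ} (hαs : α ≤ s) {n : ℕ} {x : X}
    (hball : (dynBall f n x ε ∩ Z).Nonempty → μ (dynBall f n x ε) ≤
      ENNReal.ofReal (K * Real.exp (-(n : ℝ) * s + birkhoffSum f ψ n x))) :
    μ (dynBall f n x ε ∩ Z) ≤
      ENNReal.ofReal K * ENNReal.ofReal (Real.exp (-α * (n : ℝ) + supBirkhoff f ψ n x ε)) := by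
  rcases (dynBall f n x ε ∩ Z).eq_empty_or_nonempty with hempty | hmeets
  · simp [hempty]
  have hexp : -(n : ℝ) * s + birkhoffSum f ψ n x ≤ -α * n + supBirkhoff f ψ n x ε := by
    have := birkhoffSum_le_supBirkhoff hf hψ hε n x
    nlinarith [(Nat.cast_nonneg n : (0 : ℝ) ≤ n)]
  calc μ (dynBall f n x ε ∩ Z) ≤ μ (dynBall f n x ε) := measure_mono inter_subset_left
    _ ≤ ENNReal.ofReal (K * Real.exp (-(n : ℝ) * s + birkhoffSum f ψ n x)) := hball hmeets
    _ ≤ _ := by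
      rw [ENNReal.ofReal_mul' (Real.exp_pos _).le]
      gcongr

theorem le_ppPressureAt_of_measure_dynBall_le [CompactSpace X] (hf : Continuous f)
    (hψ : Continuous ψ) (hε : 0 < ε) (hZ : 0 < μ Z) {K s : ℝ} {N : ℕ}
    (hball : ∀ n ≥ N, ∀ x : X, (dynBall f n x ε ∩ Z).Nonempty → μ (dynBall f n x ε) ≤
      ENNReal.ofReal (K * Real.exp (-(n : ℝ) * s + birkhoffSum f ψ n x))) :
    (s : EReal) ≤ ppPressureAt f ψ ε Z :=
  le_ppPressureAt_of_ppm_ne_zero fun _ hαs => ppm_ne_zero hZ.ne' ENNReal.ofReal_ne_top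
    fun n hn x => measure_dynBall_inter_le hf hψ hε hαs.le (hball n hn x)

end MassDistribution

theorem pressure_distribution_principle_general {X : Type*} [MetricSpace X] [CompactSpace X]
    [MeasurableSpace X]
    (f : X → X) (hf : Continuous f) (ψ : X → ℝ) (hψ : Continuous ψ)
    (Z : Set X)
    (s : ℝ)
    (h : ∃ ε₀ : ℝ, 0 < ε₀ ∧ ∀ ε : ℝ, 0 < ε → ε < ε₀ →
      ∃ (μ : MeasureTheory.Measure X) (K : ℝ), MeasureTheory.IsProbabilityMeasure μ ∧
        0 < K ∧ 0 < μ Z ∧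
        ∃ N : ℕ, ∀ n : ℕ, N ≤ n → ∀ x : X, (dynBall f n x ε ∩ Z).Nonempty →
          μ (dynBall f n x ε) ≤
            ENNReal.ofReal (K * Real.exp (-(n : ℝ) * s + birkhoffSum f ψ n x))) :
    (s : EReal) ≤ ppPressure f ψ Z := by
  obtain ⟨ε₀, hε₀, hmeasure⟩ := h
  refine le_ppPressure_of_eventually_le ?_
  filter_upwards [Ioo_mem_nhdsGT hε₀] with ε ⟨hε, hεε₀⟩
  obtain ⟨μ, K, -, -, hZ, N, hball⟩ := hmeasure ε hε hεε₀
  exact le_ppPressureAt_of_measure_dynBall_le hf hψ hε hZ hball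

/-- **Pressure distribution principle.** If `s ≥ 0` and for all sufficiently small `ε > 0`
there is a Borel probability measure `μ_ε` and a constant `K(ε) > 0` with `μ_ε(Z) > 0` and
`μ_ε(B_n(x, ε)) ≤ K(ε) exp(−ns + S_n ψ(x))` for all sufficiently large `n` and every
dynamical ball meeting `Z`, then `P_Z(ψ) ≥ s`. -/
theorem pressure_distribution_principle {X : Type*} [MetricSpace X] [CompactSpace X]
    [MeasurableSpace X] [BorelSpace X]
    (f : X → X) (hf : Continuous f) (ψ : X → ℝ) (hψ : Continuous ψ)
    (Z : Set X) (hZ : MeasurableSet Z)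
    (s : ℝ) (hs : 0 ≤ s)
    (h : ∃ ε₀ : ℝ, 0 < ε₀ ∧ ∀ ε : ℝ, 0 < ε → ε < ε₀ →
      ∃ (μ : MeasureTheory.Measure X) (K : ℝ), MeasureTheory.IsProbabilityMeasure μ ∧
        0 < K ∧ 0 < μ Z ∧
        ∃ N : ℕ, ∀ n : ℕ, N ≤ n → ∀ x : X, (dynBall f n x ε ∩ Z).Nonempty →
          μ (dynBall f n x ε) ≤
            ENNReal.ofReal (K * Real.exp (-(n : ℝ) * s + birkhoffSum f ψ n x))) :
    (s : EReal) ≤ ppPressure f ψ Z :=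
  pressure_distribution_principle_general f hf ψ hψ Z s h
end

section
/- Let (X,d) be a compact metric space and f: X → X a continuous map with the specification property. If φ ∈ C(X) satisfies inf_{μ ∈ M_f(X)} ∫φ dμ < sup_{μ ∈ M_f(X)} ∫φ dμ, then the irregular set X̂_φ is non-empty. -/
open MeasureTheory Filter Topology Set
open scoped ENNReal NNReal

/-!
Take invariant measures `μ₁, μ₂` with `∫ φ dμ₁ < ∫ φ dμ₂`. Since `∫ S_n φ dμ = n ∫ φ dμ` for
invariant `μ`, every `n` admits orbit segments of length `n` whose Birkhoff sums are at most
`n ∫ φ dμ₁`, and segments whose sums are at least `n ∫ φ dμ₂`. Specification, together with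
compactness, produces a single orbit that shadows such segments alternately, each far longer than
everything before it; along that orbit the Birkhoff averages come close to both integrals
infinitely often, so they do not converge.
-/

theorem Real.exists_mem_lt_mem_of_sInf_lt_sSup {s : Set ℝ} (h : sInf s < sSup s) :
    ∃ a ∈ s, ∃ b ∈ s, a < b := by
  have hs : s.Nonempty := by
    by_contra hs
    rw [Set.not_nonempty_iff_eq_empty.mp hs, Real.sInf_empty, Real.sSup_empty] at h
    exact h.false
  obtain ⟨a, has, hlt⟩ := exists_lt_of_csInf_lt hs h
  obtain ⟨b, hbs, hab⟩ := exists_lt_of_lt_csSup hs hlt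
  exact ⟨a, has, b, hbs, hab⟩

section Invariant

variable {X : Type*} [MeasurableSpace X] {f : X → X} {μ : Measure X} {φ : X → ℝ}

theorem MeasureTheory.MeasurePreserving.integrable_birkhoffSum (hf : MeasurePreserving f μ μ)
    (hφ : Integrable φ μ) (n : ℕ) : Integrable (birkhoffSum f φ n) μ := by
  unfold birkhoffSum
  exact integrable_finsetSum _ fun i _ => (hf.iterate i).integrable_comp_of_integrable hφ

theorem MeasureTheory.MeasurePreserving.integral_birkhoffSum (hf : MeasurePreserving f μ μ)
    (hφ : Integrable φ μ) (n : ℕ) : ∫ x, birkhoffSum f φ n x ∂μ = n * ∫ x, φ x ∂μ := by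
  have hcomp : ∀ i, ∫ x, φ (f^[i] x) ∂μ = ∫ x, φ x ∂μ := fun i => by
    rw [← integral_map (hf.iterate i).measurable.aemeasurable
      (by rw [(hf.iterate i).map_eq]; exact hφ.aestronglyMeasurable), (hf.iterate i).map_eq]
  have hint : ∀ i, Integrable (fun x => φ (f^[i] x)) μ := fun i =>
    (hf.iterate i).integrable_comp_of_integrable hφ
  simp only [birkhoffSum]
  rw [integral_finsetSum _ fun i _ => hint i]
  simp [hcomp]

theorem MeasureTheory.MeasurePreserving.exists_birkhoffSum_le [IsProbabilityMeasure μ]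
    (hf : MeasurePreserving f μ μ) (hφ : Integrable φ μ) (n : ℕ) :
    ∃ x, birkhoffSum f φ n x ≤ n * ∫ x, φ x ∂μ :=
  hf.integral_birkhoffSum hφ n ▸ exists_le_integral (hf.integrable_birkhoffSum hφ n)

theorem MeasureTheory.MeasurePreserving.exists_le_birkhoffSum [IsProbabilityMeasure μ]
    (hf : MeasurePreserving f μ μ) (hφ : Integrable φ μ) (n : ℕ) :
    ∃ x, n * ∫ x, φ x ∂μ ≤ birkhoffSum f φ n x :=
  hf.integral_birkhoffSum hφ n ▸ exists_integral_le (hf.integrable_birkhoffSum hφ n)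

end Invariant

theorem exists_strictMono_blocks (N m : ℕ) :
    ∃ a L : ℕ → ℕ, StrictMono a ∧ ∀ k, N * a k < L k ∧ a k + L k + m ≤ a (k + 1) := by
  let a : ℕ → ℕ := fun k => Nat.rec 0 (fun _ s => s + (N * s + 1) + m) k
  refine ⟨a, fun k => N * a k + 1, strictMono_nat_of_lt_succ fun k => ?_,
    fun k => ⟨Nat.lt_succ_self _, le_rfl⟩⟩
  show a k < a k + (N * a k + 1) + m
  omega

section Shadowing

variable {X : Type*} [PseudoMetricSpace X] {f : X → X}

theorem Specification.exists_shadowing_finite (hspec : Specification f) {ε : ℝ} (hε : 0 < ε) :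
    ∃ m : ℕ, ∀ (a L : ℕ → ℕ) (w : ℕ → X), (∀ k, a k + L k + m ≤ a (k + 1)) → ∀ K : ℕ,
      ∃ x, ∀ k < K, ∀ p < L k, dist (f^[p + a k] x) (f^[p] (w k)) < ε := by
  obtain ⟨m, hm⟩ := hspec ε hε
  refine ⟨m, fun a L w hgap K => ?_⟩
  obtain ⟨x, hx⟩ := hm K (fun j => a j) (fun j => a j + (L j - 1)) (fun _ => le_self_add)
    (fun j _ => by have := hgap j; dsimp only; omega) (fun j => w j) (fun _ => mem_univ _)
  exact ⟨x, fun k hk p hp => hx ⟨k, hk⟩ p (by dsimp only; omega)⟩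

theorem Specification.exists_shadowing [CompactSpace X] (hf : Continuous f)
    (hspec : Specification f) {ε : ℝ} (hε : 0 < ε) :
    ∃ m : ℕ, ∀ (a L : ℕ → ℕ) (w : ℕ → X), (∀ k, a k + L k + m ≤ a (k + 1)) →
      ∃ x, ∀ k, ∀ p < L k, dist (f^[p + a k] x) (f^[p] (w k)) < ε := by
  obtain ⟨m, hm⟩ := hspec.exists_shadowing_finite (half_pos hε)
  refine ⟨m, fun a L w hgap => ?_⟩
  choose xs hxs using hm a L w hgap
  obtain ⟨x, -, ψ, hψ, hlim⟩ := isCompact_univ.tendsto_subseq fun K => mem_univ (xs K)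
  refine ⟨x, fun k p hp => (half_lt_self hε).trans_le' ?_⟩
  have hdist : Tendsto (fun K => dist (f^[p + a k] (xs (ψ K))) (f^[p] (w k))) atTop
      (𝓝 (dist (f^[p + a k] x) (f^[p] (w k)))) :=
    (((hf.iterate _).dist continuous_const).tendsto x).comp hlim
  refine le_of_tendsto hdist ?_
  filter_upwards [hψ.tendsto_atTop.eventually_gt_atTop k] with K hK
  exact (hxs _ k hK p hp).le

/-- The prefix of length `a` costs at most `a C`, which the long block absorbs. -/
theorem sub_le_birkhoffSum_div_of_shadowing {φ : X → ℝ} {C c δ ε : ℝ} {a L : ℕ} {x w : X}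
    (hδ : 0 < δ) (hL : 0 < L) (hC : ∀ y, |φ y| ≤ C)
    (hφ : ∀ y z, dist y z < ε → dist (φ y) (φ z) < δ)
    (hshadow : ∀ p < L, dist (f^[p + a] x) (f^[p] w) < ε)
    (hw : L * c ≤ birkhoffSum f φ L w) (hlen : a * (C + |c|) ≤ L * δ) :
    c - 2 * δ ≤ birkhoffSum f φ (a + L) x / (a + L : ℕ) := by
  have hprefix : -(a * C) ≤ birkhoffSum f φ a x := by
    simpa [birkhoffSum] using
      Finset.card_nsmul_le_sum (Finset.range a) _ _ fun i _ => (abs_le.mp (hC _)).1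
  have hdist : dist (birkhoffSum f φ L (f^[a] x)) (birkhoffSum f φ L w) ≤ L * δ :=
    calc _ ≤ ∑ p ∈ Finset.range L, dist (φ (f^[p] (f^[a] x))) (φ (f^[p] w)) :=
          dist_birkhoffSum_birkhoffSum_le _ _ _ _ _
      _ ≤ ∑ _p ∈ Finset.range L, δ := Finset.sum_le_sum fun p hp => by
          rw [← Function.iterate_add_apply]
          exact (hφ _ _ (hshadow p (Finset.mem_range.mp hp))).le
      _ = L * δ := by simp
  rw [Real.dist_eq, abs_le] at hdist
  rw [le_div_iff₀ (by positivity), birkhoffSum_add]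
  have hc : (a : ℝ) * c ≤ a * |c| := mul_le_mul_of_nonneg_left (le_abs_self c) a.cast_nonneg
  have haδ : 0 ≤ (a : ℝ) * δ := by positivity
  push_cast
  linarith [hdist.1]

end Shadowing

section Oscillation

variable {X : Type*} {f : X → X} {φ : X → ℝ}

theorem mem_irregularSet_of_frequently {x : X} {a b : ℝ} (hab : a < b)
    (hb : ∃ᶠ n : ℕ in atTop, b ≤ birkhoffSum f φ n x / n)
    (ha : ∃ᶠ n : ℕ in atTop, birkhoffSum f φ n x / n ≤ a) : x ∈ irregularSet f φ :=
  fun ⟨_, hc⟩ => (hab.trans_le (ge_of_tendsto_of_frequently hc hb)).not_ge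
    (le_of_tendsto_of_frequently hc ha)

theorem Specification.exists_frequently_birkhoffSum_div [PseudoMetricSpace X] [CompactSpace X]
    (hf : Continuous f) (hspec : Specification f) (hφ : Continuous φ) {c₁ c₂ δ : ℝ}
    (hδ : 0 < δ) (hlow : ∀ n : ℕ, ∃ y, birkhoffSum f φ n y ≤ n * c₁)
    (hhigh : ∀ n : ℕ, ∃ z, n * c₂ ≤ birkhoffSum f φ n z) :
    ∃ x, (∃ᶠ n : ℕ in atTop, c₂ - 2 * δ ≤ birkhoffSum f φ n x / n) ∧
      ∃ᶠ n : ℕ in atTop, birkhoffSum f φ n x / n ≤ c₁ + 2 * δ := by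
  obtain ⟨C, hC⟩ := isCompact_univ.exists_bound_of_continuousOn hφ.continuousOn
  simp only [mem_univ, Real.norm_eq_abs, forall_const] at hC
  obtain ⟨ε, hε, hφε⟩ := Metric.uniformContinuous_iff.mp
    (CompactSpace.uniformContinuous_of_continuous hφ) δ hδ
  obtain ⟨m, hm⟩ := hspec.exists_shadowing hf hε
  obtain ⟨N, hN⟩ := exists_nat_ge ((C + |c₁| + |c₂|) / δ)
  obtain ⟨a, L, ha, haL⟩ := exists_strictMono_blocks N m
  have hlen : ∀ k c, |c| ≤ |c₁| + |c₂| → (a k : ℝ) * (C + |c|) ≤ L k * δ := fun k c hc =>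
    calc (a k : ℝ) * (C + |c|) ≤ a k * (N * δ) := by
          gcongr
          linarith [(div_le_iff₀ hδ).mp hN]
      _ = (N * a k : ℕ) * δ := by push_cast; ring
      _ ≤ L k * δ := by gcongr; exact_mod_cast (haL k).1.le
  choose y hy using hlow
  choose z hz using hhigh
  obtain ⟨x, hx⟩ := hm a L (fun k => if Even k then z (L k) else y (L k)) fun k => (haL k).2
  have hL : ∀ k, 0 < L k := fun k => (haL k).1.trans_le' (Nat.zero_le _)
  have htimes : Tendsto (fun k => a k + L k) atTop atTop :=
    tendsto_atTop_mono (fun k => Nat.le_add_right _ _) ha.tendsto_atTop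
  refine ⟨x, htimes.frequently_map _ (fun k hk => ?_) Nat.frequently_even,
    htimes.frequently_map _ (fun k hk => ?_) Nat.frequently_odd⟩
  · refine sub_le_birkhoffSum_div_of_shadowing hδ (hL k) hC hφε (w := z (L k)) ?_ (hz _)
      (hlen k c₂ (le_add_of_nonneg_left (abs_nonneg _)))
    simpa [hk] using hx k
  · have hneg := sub_le_birkhoffSum_div_of_shadowing hδ (hL k) (φ := -φ) (c := -c₁)
      (fun u => (abs_neg (φ u)).trans_le (hC u)) (fun u v huv => by simpa using hφε huv)
      (w := y (L k)) (by simpa [Nat.not_even_iff_odd.mpr hk] using hx k)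
      (by simpa [birkhoffSum_neg] using hy (L k))
      (hlen k (-c₁) (by simp))
    rw [birkhoffSum_neg, neg_div] at hneg
    linarith

end Oscillation

/-- If `f` has the specification property and the integrals of `φ` against invariant
probability measures are not all equal, then the irregular set of `φ` is non-empty. -/
theorem irregular_set_nonempty {X : Type*} [MetricSpace X] [CompactSpace X]
    [MeasurableSpace X] [BorelSpace X]
    (f : X → X) (hf : Continuous f) (hspec : Specification f)
    (φ : X → ℝ) (hφ : Continuous φ)
    (hne : sInf (invIntegrals f φ) < sSup (invIntegrals f φ)) :
    (irregularSet f φ).Nonempty := by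
  obtain ⟨_, ⟨μ₁, _, hμ₁, rfl⟩, _, ⟨μ₂, _, hμ₂, rfl⟩, hlt⟩ :=
    Real.exists_mem_lt_mem_of_sInf_lt_sSup hne
  have hφint : ∀ μ : Measure X, [IsFiniteMeasure μ] → Integrable φ μ := fun _ _ =>
    hφ.integrable_of_hasCompactSupport (HasCompactSupport.of_compactSpace φ)
  obtain ⟨x, hhigh, hlow⟩ := hspec.exists_frequently_birkhoffSum_div hf hφ
    (δ := (∫ x, φ x ∂μ₂ - ∫ x, φ x ∂μ₁) / 5) (by linarith)
    (MeasurePreserving.mk hf.measurable hμ₁ |>.exists_birkhoffSum_le (hφint μ₁))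
    (MeasurePreserving.mk hf.measurable hμ₂ |>.exists_le_birkhoffSum (hφint μ₂))
  exact ⟨x, mem_irregularSet_of_frequently (by linarith) hhigh hlow⟩
end
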